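/- arXiv:2311.05408 — 2 statements merged into one kernel-verified Lean document; each statement's English description precedes it below -/
import Mathlib

section
/- The quotient ring ℂ[x,y,z]/I, where I = ((x²) + (y,z)²)² + (y³ − x³z), is a 24-dimensional ℂ-vector space. -/
/-!
Write `x, y, z` for `X 0, X 1, X 2` and `J = (x²) + (y, z)²`, so that `I = J² + (y³ - x³z)`.
A monomial `x^a y^b z^c` lies in `J ^ (a / 2 + (b + c) / 2)`, while `J²` is spanned by monomials
with `a / 2 + (b + c) / 2 ≥ 2`; together with `xy³ = x (y³ - x³z) + z x⁴` this pins down the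
monomials lying in `I`. The remaining ones are 24 standard monomials and `y³ ≡ x³z`. The linear
map fixing the standard monomials, sending `y³` to `x³z` and killing all other monomials has
kernel exactly `I`: it kills `m (y³ - x³z)` since for a monomial `m ≠ 1` both terms are
monomials of `I`.
-/

open MvPolynomial

theorem LinearMap.ker_eq_of_sub_mem {R V : Type*} [Ring R] [AddCommGroup V]
    [Module R V] {U : Submodule R V} {N : V →ₗ[R] V} (h₁ : ∀ v, N v - v ∈ U)
    (h₂ : ∀ u ∈ U, N u = 0) : LinearMap.ker N = U := by
  ext v
  refine ⟨fun hv => ?_, h₂ v⟩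
  simpa [LinearMap.mem_ker.mp hv] using h₁ v

def LinearMap.kerIdeal {R A M : Type*} [CommSemiring R] [Semiring A] [Algebra R A]
    [AddCommMonoid M] [Module R M] (N : A →ₗ[R] M) : Ideal A where
  carrier := {a | ∀ b, N (b * a) = 0}
  add_mem' ha hb b := by rw [mul_add, map_add, ha, hb, add_zero]
  zero_mem' b := by rw [mul_zero, map_zero]
  smul_mem' c a ha b := by rw [smul_eq_mul, ← mul_assoc]; exact ha _

theorem pow_mem_span_sq_pow {R : Type*} [CommSemiring R] (x : R) (n : ℕ) :
    x ^ n ∈ Ideal.span {x ^ 2} ^ (n / 2) := by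
  have h := Ideal.mul_mem_right (x ^ (n % 2)) _
    (Ideal.pow_mem_pow (Ideal.mem_span_singleton_self (x ^ 2)) (n / 2))
  rwa [← pow_mul, ← pow_add, Nat.div_add_mod] at h

namespace MvPolynomial

variable {R σ : Type*}

variable (R) in
noncomputable def monomialIdeal [CommSemiring R] (s : Set (σ →₀ ℕ)) :
    Ideal (MvPolynomial σ R) :=
  Ideal.span ((monomial · 1) '' s)

theorem monomial_mem_monomialIdeal [CommSemiring R] {s : Set (σ →₀ ℕ)} {d : σ →₀ ℕ}
    (hd : d ∈ s) : monomial d (1 : R) ∈ monomialIdeal R s :=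
  Ideal.subset_span ⟨d, hd, rfl⟩

theorem monomialIdeal_mul_le [CommSemiring R] {s t u : Set (σ →₀ ℕ)}
    (h : ∀ a ∈ s, ∀ b ∈ t, a + b ∈ u) :
    monomialIdeal R s * monomialIdeal R t ≤ monomialIdeal R u := by
  rw [monomialIdeal, monomialIdeal, Ideal.span_mul_span', Ideal.span_le]
  rintro _ ⟨_, ⟨a, ha, rfl⟩, _, ⟨b, hb, rfl⟩, rfl⟩
  simp only [SetLike.mem_coe, monomial_mul, one_mul]
  exact monomial_mem_monomialIdeal (h a ha b hb)

theorem mem_kerIdeal_iff_monomial [CommSemiring R] {M : Type*} [AddCommMonoid M] [Module R M]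
    {N : MvPolynomial σ R →ₗ[R] M} {p : MvPolynomial σ R} :
    p ∈ N.kerIdeal ↔ ∀ d, N (monomial d 1 * p) = 0 := by
  refine ⟨fun hp d => hp _, fun hp q => ?_⟩
  induction q using induction_on' with
  | monomial d a =>
    rw [show monomial d a = a • monomial d (1 : R) by rw [smul_monomial, smul_eq_mul, mul_one],
      smul_mul_assoc, map_smul, hp, smul_zero]
  | add q r hq hr => rw [add_mul, map_add, hq, hr, add_zero]

theorem sub_mem_of_forall_monomial [CommRing R] {U : Submodule R (MvPolynomial σ R)}
    {N : MvPolynomial σ R →ₗ[R] MvPolynomial σ R}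
    (h : ∀ d, N (monomial d 1) - monomial d 1 ∈ U) (p : MvPolynomial σ R) : N p - p ∈ U := by
  induction p using induction_on' with
  | monomial d a =>
    rw [show monomial d a = a • monomial d (1 : R) by rw [smul_monomial, smul_eq_mul, mul_one],
      map_smul, ← smul_sub]
    exact U.smul_mem a (h d)
  | add p q hp hq => simpa only [map_add, add_sub_add_comm] using U.add_mem hp hq

theorem monomial_one_fin_three [CommSemiring R] (d : Fin 3 →₀ ℕ) :
    monomial d (1 : R) = X 0 ^ d 0 * X 1 ^ d 1 * X 2 ^ d 2 := by
  rw [monomial_eq, C_1, one_mul, Finsupp.prod_fintype _ _ fun _ => pow_zero _,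
    Fin.prod_univ_three]

end MvPolynomial

namespace QuotientByI

def jOrder (d : Fin 3 →₀ ℕ) : ℕ := d 0 / 2 + (d 1 + d 2) / 2

def exponentsInI : Set (Fin 3 →₀ ℕ) := {d | 2 ≤ jOrder d ∨ (1 ≤ d 0 ∧ 3 ≤ d 1)}

noncomputable def yCubed : Fin 3 →₀ ℕ := Finsupp.single 1 3

noncomputable def xCubedZ : Fin 3 →₀ ℕ := Finsupp.single 0 3 + Finsupp.single 2 1

def standardExponents : Set (Fin 3 →₀ ℕ) := {d | d ∉ exponentsInI ∧ d ≠ yCubed}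

theorem add_mem_exponentsInI (e : Fin 3 →₀ ℕ) {d : Fin 3 →₀ ℕ}
    (hd : d ∈ exponentsInI) : e + d ∈ exponentsInI := by
  simp only [exponentsInI, jOrder, Set.mem_ofPred_eq, Finsupp.add_apply] at hd ⊢
  omega

theorem one_le_sum_of_ne_zero {e : Fin 3 →₀ ℕ} (he : e ≠ 0) : 1 ≤ e 0 + e 1 + e 2 := by
  by_contra! h
  refine he (Finsupp.ext fun i => ?_)
  fin_cases i <;> simp only [Fin.zero_eta, Fin.mk_one, Fin.reduceFinMk, Finsupp.coe_zero,
    Pi.zero_apply] <;> omega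

theorem add_yCubed_mem_exponentsInI {e : Fin 3 →₀ ℕ} (he : e ≠ 0) :
    e + yCubed ∈ exponentsInI := by
  have := one_le_sum_of_ne_zero he
  simp only [exponentsInI, jOrder, yCubed, Set.mem_ofPred_eq, Finsupp.add_apply,
    Finsupp.single_apply, Fin.reduceEq, ↓reduceIte]
  omega

theorem add_xCubedZ_mem_exponentsInI {e : Fin 3 →₀ ℕ} (he : e ≠ 0) :
    e + xCubedZ ∈ exponentsInI := by
  have := one_le_sum_of_ne_zero he
  simp only [exponentsInI, jOrder, xCubedZ, Set.mem_ofPred_eq, Finsupp.add_apply,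
    Finsupp.single_apply, Fin.reduceEq, ↓reduceIte]
  omega

theorem yCubed_notMem_exponentsInI : yCubed ∉ exponentsInI := by
  simp [exponentsInI, jOrder, yCubed]

theorem xCubedZ_mem_standardExponents : xCubedZ ∈ standardExponents := by
  refine ⟨by simp [exponentsInI, jOrder, xCubedZ], fun h => ?_⟩
  simpa [xCubedZ, yCubed] using DFunLike.congr_fun h 0

theorem coe_yCubed : ⇑yCubed = ![0, 3, 0] := by
  ext i
  fin_cases i <;> simp [yCubed]

theorem card_standardExponents : Nat.card standardExponents = 24 := by
  -- standard exponents have all coordinates below 4, so they can be counted by `decide`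
  let F := (Fintype.piFinset fun _ : Fin 3 => Finset.range 4).filter
    fun v => ¬(2 ≤ v 0 / 2 + (v 1 + v 2) / 2 ∨ (1 ≤ v 0 ∧ 3 ≤ v 1)) ∧ v ≠ ![0, 3, 0]
  have hF : standardExponents = DFunLike.coe ⁻¹' F := by
    ext d
    simp only [standardExponents, exponentsInI, jOrder, F, Set.mem_ofPred_eq, Set.mem_preimage,
      Finset.coe_filter, Fintype.mem_piFinset, Finset.mem_range, ne_eq, ← DFunLike.coe_fn_eq,
      coe_yCubed, Fin.forall_fin_succ, Fin.succ_zero_eq_one, Fin.succ_one_eq_two,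
      IsEmpty.forall_iff, and_true]
    refine ⟨fun h => ⟨?_, h⟩, And.right⟩
    omega
  rw [hF, Nat.card_preimage_of_injective DFunLike.coe_injective
    fun v _ => ⟨Finsupp.equivFunOnFinite.symm v, rfl⟩, Nat.card_eq_card_toFinset,
    Finset.toFinset_coe]
  decide

variable {R : Type*} [CommRing R]

variable (R) in
noncomputable def J : Ideal (MvPolynomial (Fin 3) R) :=
  Ideal.span {X 0 ^ 2} + Ideal.span {X 1, X 2} ^ 2

variable (R) in
noncomputable def I : Ideal (MvPolynomial (Fin 3) R) :=
  J R ^ 2 + Ideal.span {X 1 ^ 3 - X 0 ^ 3 * X 2}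

theorem monomial_mem_J_pow (d : Fin 3 →₀ ℕ) : monomial d (1 : R) ∈ J R ^ jOrder d := by
  have hx : X 0 ^ d 0 ∈ J R ^ (d 0 / 2) :=
    Ideal.pow_right_mono le_sup_left _ (pow_mem_span_sq_pow _ _)
  have hyz : X 1 ^ d 1 * X 2 ^ d 2 ∈ J R ^ ((d 1 + d 2) / 2) := by
    have hy : (X 1 : MvPolynomial (Fin 3) R) ∈ Ideal.span {X 1, X 2} :=
      Ideal.subset_span (Set.mem_insert _ _)
    have hz : (X 2 : MvPolynomial (Fin 3) R) ∈ Ideal.span {X 1, X 2} :=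
      Ideal.subset_span (Set.mem_insert_of_mem _ rfl)
    have h : X 1 ^ d 1 * X 2 ^ d 2 ∈
        Ideal.span {(X 1 : MvPolynomial (Fin 3) R), X 2} ^ (d 1 + d 2) := by
      rw [pow_add]
      exact Ideal.mul_mem_mul (Ideal.pow_mem_pow hy _) (Ideal.pow_mem_pow hz _)
    refine Ideal.pow_right_mono le_sup_right _ ?_
    rw [← pow_mul]
    exact Ideal.pow_le_pow_right (Nat.mul_div_le _ _) h
  rw [monomial_one_fin_three, mul_assoc, jOrder, pow_add]
  exact Ideal.mul_mem_mul hx hyz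

theorem X_one_pow_three_sub_mem_I :
    (X 1 ^ 3 - X 0 ^ 3 * X 2 : MvPolynomial (Fin 3) R) ∈ I R :=
  Ideal.mem_sup_right (Ideal.mem_span_singleton_self _)

theorem monomial_mem_I {d : Fin 3 →₀ ℕ} (hd : d ∈ exponentsInI) :
    monomial d (1 : R) ∈ I R := by
  have hJ {d : Fin 3 →₀ ℕ} (hd : 2 ≤ jOrder d) : monomial d (1 : R) ∈ I R :=
    Ideal.mem_sup_left (Ideal.pow_le_pow_right hd (monomial_mem_J_pow d))
  rcases hd with hd | ⟨h0, h1⟩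
  · exact hJ hd
  · have hx4 : (X 0 ^ 4 : MvPolynomial (Fin 3) R) ∈ I R := by
      simpa [X_pow_eq_monomial] using hJ (d := Finsupp.single 0 4) (by simp [jOrder])
    obtain ⟨a, ha⟩ := Nat.exists_eq_add_of_le' h0
    obtain ⟨b, hb⟩ := Nat.exists_eq_add_of_le' h1
    rw [monomial_one_fin_three, ha, hb,
      show (X 0 ^ (a + 1) * X 1 ^ (b + 3) * X 2 ^ d 2 : MvPolynomial (Fin 3) R) =
        X 0 ^ a * X 1 ^ b * X 2 ^ d 2 * (X 0 * (X 1 ^ 3 - X 0 ^ 3 * X 2) + X 2 * X 0 ^ 4) by ring]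
    exact Ideal.mul_mem_left _ _
      (add_mem (Ideal.mul_mem_left _ _ X_one_pow_three_sub_mem_I) (Ideal.mul_mem_left _ _ hx4))

theorem J_sq_le_monomialIdeal : J R ^ 2 ≤ monomialIdeal R exponentsInI := by
  have hyz : Ideal.span {(X 1 : MvPolynomial (Fin 3) R), X 2} ≤
      monomialIdeal R {d | 1 ≤ d 1 + d 2} := by
    rw [Ideal.span_le, Set.insert_subset_iff, Set.singleton_subset_iff, X, X]
    exact ⟨monomial_mem_monomialIdeal (by simp), monomial_mem_monomialIdeal (by simp)⟩
  have hJ : J R ≤ monomialIdeal R {d | 1 ≤ jOrder d} := by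
    refine sup_le ?_ ?_
    · rw [Ideal.span_le, Set.singleton_subset_iff, X_pow_eq_monomial]
      exact monomial_mem_monomialIdeal (by simp [jOrder])
    · rw [pow_two]
      refine (Ideal.mul_mono hyz hyz).trans (monomialIdeal_mul_le fun a ha b hb => ?_)
      simp only [jOrder, Set.mem_ofPred_eq, Finsupp.add_apply] at ha hb ⊢
      omega
  rw [pow_two]
  refine (Ideal.mul_mono hJ hJ).trans (monomialIdeal_mul_le fun a ha b hb => ?_)
  simp only [exponentsInI, jOrder, Set.mem_ofPred_eq, Finsupp.add_apply] at ha hb ⊢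
  omega

open Classical in
noncomputable def normalFormOfExponent (d : Fin 3 →₀ ℕ) : MvPolynomial (Fin 3) R :=
  if d ∈ standardExponents then monomial d 1
  else if d = yCubed then monomial xCubedZ 1
  else 0

variable (R) in
noncomputable def normalForm : MvPolynomial (Fin 3) R →ₗ[R] MvPolynomial (Fin 3) R :=
  (basisMonomials (Fin 3) R).constr R normalFormOfExponent

theorem normalForm_monomial (d : Fin 3 →₀ ℕ) :
    normalForm R (monomial d 1) = normalFormOfExponent d := by
  simpa [normalForm] using (basisMonomials (Fin 3) R).constr_basis R normalFormOfExponent d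

theorem normalFormOfExponent_of_mem_standardExponents {d : Fin 3 →₀ ℕ}
    (hd : d ∈ standardExponents) :
    normalFormOfExponent d = (monomial d 1 : MvPolynomial (Fin 3) R) :=
  if_pos hd

theorem normalFormOfExponent_of_mem_exponentsInI {d : Fin 3 →₀ ℕ} (hd : d ∈ exponentsInI) :
    normalFormOfExponent d = (0 : MvPolynomial (Fin 3) R) := by
  have hy : d ≠ yCubed := by rintro rfl; exact yCubed_notMem_exponentsInI hd
  rw [normalFormOfExponent, if_neg fun h => h.1 hd, if_neg hy]

theorem normalFormOfExponent_yCubed :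
    normalFormOfExponent yCubed = (monomial xCubedZ 1 : MvPolynomial (Fin 3) R) := by
  rw [normalFormOfExponent, if_neg fun h => h.2 rfl, if_pos rfl]

theorem monomial_yCubed : (monomial yCubed 1 : MvPolynomial (Fin 3) R) = X 1 ^ 3 := by
  rw [yCubed, X_pow_eq_monomial]

theorem monomial_xCubedZ : (monomial xCubedZ 1 : MvPolynomial (Fin 3) R) = X 0 ^ 3 * X 2 := by
  rw [xCubedZ, X_pow_eq_monomial, X, monomial_mul, one_mul]

theorem normalFormOfExponent_sub_mem_I (d : Fin 3 →₀ ℕ) :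
    normalFormOfExponent d - monomial d 1 ∈ I R := by
  by_cases hs : d ∈ standardExponents
  · rw [normalFormOfExponent_of_mem_standardExponents hs, sub_self]
    exact zero_mem _
  by_cases hy : d = yCubed
  · rw [hy, normalFormOfExponent_yCubed, monomial_yCubed, monomial_xCubedZ, ← neg_sub]
    exact neg_mem X_one_pow_three_sub_mem_I
  have hd : d ∈ exponentsInI := by_contra fun h => hs ⟨h, hy⟩
  rw [normalFormOfExponent_of_mem_exponentsInI hd, zero_sub]
  exact neg_mem (monomial_mem_I hd)

theorem I_le_kerIdeal_normalForm : I R ≤ (normalForm R).kerIdeal := by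
  refine sup_le (J_sq_le_monomialIdeal.trans ?_) ?_
  · rw [monomialIdeal, Ideal.span_le]
    rintro _ ⟨l, hl, rfl⟩
    rw [SetLike.mem_coe, mem_kerIdeal_iff_monomial]
    intro d
    rw [monomial_mul, one_mul, normalForm_monomial,
      normalFormOfExponent_of_mem_exponentsInI (add_mem_exponentsInI d hl)]
  · rw [Ideal.span_le, Set.singleton_subset_iff, SetLike.mem_coe, mem_kerIdeal_iff_monomial]
    intro e
    rw [mul_sub, map_sub, sub_eq_zero, ← monomial_yCubed, ← monomial_xCubedZ, monomial_mul,
      monomial_mul, one_mul, normalForm_monomial, normalForm_monomial]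
    rcases eq_or_ne e 0 with rfl | he
    · rw [zero_add, zero_add, normalFormOfExponent_yCubed,
        normalFormOfExponent_of_mem_standardExponents xCubedZ_mem_standardExponents]
    · rw [normalFormOfExponent_of_mem_exponentsInI (add_yCubed_mem_exponentsInI he),
        normalFormOfExponent_of_mem_exponentsInI (add_xCubedZ_mem_exponentsInI he)]

theorem ker_normalForm : LinearMap.ker (normalForm R) = (I R).restrictScalars R :=
  LinearMap.ker_eq_of_sub_mem
    (sub_mem_of_forall_monomial fun d => by
      rw [normalForm_monomial]; exact normalFormOfExponent_sub_mem_I d)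
    fun p hp => by simpa using I_le_kerIdeal_normalForm hp 1

theorem range_normalForm :
    LinearMap.range (normalForm R) = restrictSupport R standardExponents := by
  rw [normalForm, Module.Basis.constr_range]
  refine le_antisymm (Submodule.span_le.mpr ?_) ?_
  · rintro _ ⟨d, rfl⟩
    unfold normalFormOfExponent
    split_ifs with hs
    · exact (monomial_mem_restrictSupport R).mpr (Or.inl hs)
    · exact (monomial_mem_restrictSupport R).mpr (Or.inl xCubedZ_mem_standardExponents)
    · exact zero_mem _
  · rw [restrictSupport_eq_span]
    exact Submodule.span_mono (by rintro _ ⟨d, hd, rfl⟩; exact ⟨d, if_pos hd⟩)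

theorem finrank_quotient_I [Nontrivial R] :
    Module.finrank R (MvPolynomial (Fin 3) R ⧸ I R) = 24 := by
  let e := (Submodule.Quotient.restrictScalarsEquiv R (I R)).symm ≪≫ₗ
    Submodule.quotEquivOfEq _ _ ker_normalForm.symm ≪≫ₗ
    (normalForm R).quotKerEquivRange ≪≫ₗ LinearEquiv.ofEq _ _ range_normalForm
  rw [e.finrank_eq, Module.finrank_eq_nat_card_basis (basisRestrictSupport R _),
    card_standardExponents]

end QuotientByI

/-- The quotient ring `ℂ[x,y,z]/I`, where `I = ((x²) + (y,z)²)² + (y³ − x³z)`,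
is a 24-dimensional `ℂ`-vector space. -/
theorem quotient_by_I_finrank_eq_24 :
    Module.finrank ℂ
      (MvPolynomial (Fin 3) ℂ ⧸
        ((Ideal.span {(X 0 : MvPolynomial (Fin 3) ℂ) ^ 2}
            + (Ideal.span {(X 1 : MvPolynomial (Fin 3) ℂ), X 2}) ^ 2) ^ 2
          + Ideal.span {(X 1 : MvPolynomial (Fin 3) ℂ) ^ 3 - (X 0) ^ 3 * X 2})) = 24 :=
  QuotientByI.finrank_quotient_I
end

section
/- Let G be an algebraic group with a character χ: G → ℂ* that is nontrivial on the connected component of the identity, B a smooth variety, and f: G × B → ℂ a function with f(g,b) = χ(g) f(1,b). Set f̄ = f(1,−). Then the critical locus (as a scheme) Z(df) equals pr_B^{-1}(Z(df̄) ∩ Z(f̄)). -/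
/-!
Since `f (g, b) = χ g * f̄ b`, the product rule splits `df` at `(g, b)` into the components
`f̄ b • dχ_g` on `T_g G` and `χ g • df̄_b` on `T_b B`, and `df` vanishes iff both do. As `χ g ≠ 0`,
the second says `df̄_b = 0`. For the first, `dχ` vanishes nowhere: `χ ∘ (a * ·) = χ a • χ`, so if
`dχ` vanished at one point it would vanish everywhere, making `χ` locally constant and hence trivial
on the identity component.
-/

open Manifold Set Topology

theorem ContinuousLinearMap.coprod_eq_zero_iff {R M M₁ M₂ : Type*} [Semiring R]
    [TopologicalSpace M] [AddCommMonoid M] [Module R M] [ContinuousAdd M]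
    [TopologicalSpace M₁] [AddCommMonoid M₁] [Module R M₁]
    [TopologicalSpace M₂] [AddCommMonoid M₂] [Module R M₂]
    {f₁ : M₁ →L[R] M} {f₂ : M₂ →L[R] M} : f₁.coprod f₂ = 0 ↔ f₁ = 0 ∧ f₂ = 0 := by
  refine ⟨fun h => ⟨?_, ?_⟩, fun ⟨h₁, h₂⟩ => by ext <;> simp [h₁, h₂]⟩
  · simpa using congr(($h).comp (.inl R M₁ M₂))
  · simpa using congr(($h).comp (.inr R M₁ M₂))

section ProductRule

variable {𝕜 : Type*} [NontriviallyNormedField 𝕜]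
  {E : Type*} [NormedAddCommGroup E] [NormedSpace 𝕜 E]
  {H : Type*} [TopologicalSpace H] {I : ModelWithCorners 𝕜 E H}
  {M : Type*} [TopologicalSpace M] [ChartedSpace H M]
  {E' : Type*} [NormedAddCommGroup E'] [NormedSpace 𝕜 E']
  {H' : Type*} [TopologicalSpace H'] {J : ModelWithCorners 𝕜 E' H'}
  {N : Type*} [TopologicalSpace N] [ChartedSpace H' N]
  {φ : M → 𝕜} {ψ : N → 𝕜} {x : M} {y : N}

theorem mfderiv_mul_fst_snd
    (hφ : MDifferentiableAt I 𝓘(𝕜, 𝕜) φ x) (hψ : MDifferentiableAt J 𝓘(𝕜, 𝕜) ψ y) :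
    mfderiv (I.prod J) 𝓘(𝕜, 𝕜) (fun p => φ p.1 * ψ p.2) (x, y) =
      (ψ y • mfderiv I 𝓘(𝕜, 𝕜) φ x).coprod (φ x • mfderiv J 𝓘(𝕜, 𝕜) ψ y) :=
  ((hφ.hasMFDerivAt.comp (x, y) (hasMFDerivAt_fst (x, y))).mul
    (hψ.hasMFDerivAt.comp (x, y) (hasMFDerivAt_snd (x, y)))).mfderiv.trans (add_comm _ _)

theorem mfderiv_mul_fst_snd_eq_zero_iff
    (hφ : MDifferentiableAt I 𝓘(𝕜, 𝕜) φ x) (hψ : MDifferentiableAt J 𝓘(𝕜, 𝕜) ψ y) :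
    mfderiv (I.prod J) 𝓘(𝕜, 𝕜) (fun p => φ p.1 * ψ p.2) (x, y) = 0 ↔
      ψ y • mfderiv I 𝓘(𝕜, 𝕜) φ x = 0 ∧ φ x • mfderiv J 𝓘(𝕜, 𝕜) ψ y = 0 := by
  rw [mfderiv_mul_fst_snd hφ hψ]
  exact ContinuousLinearMap.coprod_eq_zero_iff

end ProductRule

theorem isLocallyConstant_of_mfderiv_eq_zero
    {𝕜 : Type*} [NontriviallyNormedField 𝕜] [IsRCLikeNormedField 𝕜]
    {E : Type*} [NormedAddCommGroup E] [NormedSpace 𝕜 E]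
    {H : Type*} [TopologicalSpace H] {I : ModelWithCorners 𝕜 E H}
    {M : Type*} [TopologicalSpace M] [ChartedSpace H M] [IsManifold I 1 M]
    {F : Type*} [NormedAddCommGroup F] [NormedSpace 𝕜 F] {f : M → F}
    (hf : MDifferentiable I 𝓘(𝕜, F) f) (hf' : ∀ x, mfderiv I 𝓘(𝕜, F) f x = 0) :
    IsLocallyConstant f := by
  let : RCLike 𝕜 := IsRCLikeNormedField.rclike 𝕜
  let : NormedSpace ℝ E := .restrictScalars ℝ 𝕜 E
  rw [IsLocallyConstant.iff_eventually_eq]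
  intro x
  set e := extChartAt I x
  have hzero : ∀ z ∈ e.target, HasFDerivWithinAt (f ∘ e.symm) (0 : E →L[𝕜] F) e.target z := by
    intro z hz
    have hsymm : MDifferentiableWithinAt 𝓘(𝕜, E) I e.symm e.target z :=
      (contMDiffOn_extChartAt_symm x z hz).mdifferentiableWithinAt one_ne_zero
    have hfz : HasMFDerivAt I 𝓘(𝕜, F) f (e.symm z) 0 := hf' (e.symm z) ▸ (hf _).hasMFDerivAt
    have := hfz.comp_hasMFDerivWithinAt z hsymm.hasMFDerivWithinAt
    rw [ContinuousLinearMap.zero_comp] at this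
    exact hasMFDerivWithinAt_iff_hasFDerivWithinAt.mp this
  -- `e.target` is only a neighbourhood within `range I`, but `range I` is convex, so the mean
  -- value theorem still applies on `ball ∩ range I`.
  obtain ⟨r, hr, hball⟩ : ∃ r > 0, Metric.ball (e x) r ∩ range I ⊆ e.target :=
    Metric.mem_nhdsWithin_iff.mp (extChartAt_target_mem_nhdsWithin x)
  set s := Metric.ball (e x) r ∩ range I
  have hconst : ∀ z ∈ s, f (e.symm z) = f x := by
    intro z hz
    have hxs : e x ∈ s := ⟨Metric.mem_ball_self hr, mem_range_self _⟩
    have := ((convex_ball (e x) r).inter I.convex_range).norm_image_sub_le_of_norm_hasFDerivWithin_le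
      (fun w hw => (hzero w (hball hw)).mono hball) (fun _ _ => norm_zero.le) hxs hz
    rw [zero_mul, norm_le_zero_iff, sub_eq_zero] at this
    simpa [e, extChartAt_to_inv] using this
  have hs : s ∈ 𝓝[range I] (e x) :=
    Filter.inter_mem (mem_nhdsWithin_of_mem_nhds (Metric.ball_mem_nhds _ hr)) self_mem_nhdsWithin
  filter_upwards [extChartAt_preimage_mem_nhds_of_mem_nhdsWithin (mem_extChartAt_source x) hs,
    extChartAt_source_mem_nhds (I := I) x] with y hys hy
  rw [← hconst _ hys, e.left_inv hy]

section Character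

variable {𝕜 : Type*} [NontriviallyNormedField 𝕜]
  {E : Type*} [NormedAddCommGroup E] [NormedSpace 𝕜 E]
  {H : Type*} [TopologicalSpace H] {I : ModelWithCorners 𝕜 E H}
  {G : Type*} [TopologicalSpace G] [ChartedSpace H G] [Group G] [ContMDiffMul I 1 G]
  {χ : G →* 𝕜ˣ}

theorem mfderiv_character_eq_zero_of_eq_zero
    (hχ : MDifferentiable I 𝓘(𝕜, 𝕜) fun g => (χ g : 𝕜))
    {g : G} (hg : mfderiv I 𝓘(𝕜, 𝕜) (fun g => (χ g : 𝕜)) g = 0) (y : G) :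
    mfderiv I 𝓘(𝕜, 𝕜) (fun g => (χ g : 𝕜)) y = 0 := by
  set a := g * y⁻¹
  have htranslate : (fun z => (χ (a * z) : 𝕜)) = (χ a : 𝕜) • fun z => (χ z : 𝕜) := by
    ext z; simp
  have h0 : HasMFDerivAt I 𝓘(𝕜, 𝕜) (fun g => (χ g : 𝕜)) (a * y) 0 := by
    rw [show a * y = g by simp [a], ← hg]
    exact (hχ g).hasMFDerivAt
  have hcomp := h0.comp y mdifferentiable_mul_left.mdifferentiableAt.hasMFDerivAt
  rw [ContinuousLinearMap.zero_comp] at hcomp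
  have hsmul := (hχ y).hasMFDerivAt.const_smul (χ a : 𝕜)
  rw [← htranslate] at hsmul
  exact (smul_eq_zero.mp (hasMFDerivAt_unique hsmul hcomp)).resolve_left (χ a).ne_zero

variable [IsRCLikeNormedField 𝕜]

theorem mfderiv_character_ne_zero (hχ : MDifferentiable I 𝓘(𝕜, 𝕜) fun g => (χ g : 𝕜))
    (hnontriv : ∃ g ∈ connectedComponent (1 : G), χ g ≠ 1) (g : G) :
    mfderiv I 𝓘(𝕜, 𝕜) (fun g => (χ g : 𝕜)) g ≠ 0 := by
  intro hg
  obtain ⟨g₀, hg₀, hχg₀⟩ := hnontriv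
  have hconst := (isLocallyConstant_of_mfderiv_eq_zero hχ
    (mfderiv_character_eq_zero_of_eq_zero hχ hg)).apply_eq_of_isPreconnected
    isPreconnected_connectedComponent hg₀ mem_connectedComponent
  exact hχg₀ (Units.ext (by simpa using hconst))

end Character

theorem critical_locus_of_semiinvariant_general
    {EG : Type*} [NormedAddCommGroup EG] [NormedSpace ℂ EG]
    {HG : Type*} [TopologicalSpace HG] (IG : ModelWithCorners ℂ EG HG)
    {EB : Type*} [NormedAddCommGroup EB] [NormedSpace ℂ EB]
    {HB : Type*} [TopologicalSpace HB] (IB : ModelWithCorners ℂ EB HB)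
    {G : Type*} [TopologicalSpace G] [ChartedSpace HG G] [Group G]
    [LieGroup IG (⊤ : ℕ∞) G]
    {B : Type*} [TopologicalSpace B] [ChartedSpace HB B]
    (χ : G →* ℂˣ) (hχ : ContMDiff IG 𝓘(ℂ, ℂ) (⊤ : ℕ∞) fun g : G => (χ g : ℂ))
    (hnontriv : ∃ g ∈ connectedComponent (1 : G), χ g ≠ 1)
    (f : G × B → ℂ) (hf : ContMDiff (IG.prod IB) 𝓘(ℂ, ℂ) (⊤ : ℕ∞) f)
    (hsemi : ∀ (g : G) (b : B), f (g, b) = (χ g : ℂ) * f (1, b)) :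
    {p : G × B | mfderiv (IG.prod IB) 𝓘(ℂ, ℂ) f p = 0}
      = Prod.snd ⁻¹'
        {b : B | mfderiv IB 𝓘(ℂ, ℂ) (fun b : B => f (1, b)) b = 0 ∧ f (1, b) = 0} := by
  have hχ' : MDifferentiable IG 𝓘(ℂ, ℂ) fun g => (χ g : ℂ) := hχ.mdifferentiable (by simp)
  have hfbar : MDifferentiable IB 𝓘(ℂ, ℂ) fun b => f (1, b) :=
    (hf.comp (contMDiff_const.prodMk contMDiff_id)).mdifferentiable (by simp)
  have hprod : (fun p : G × B => (χ p.1 : ℂ) * f (1, p.2)) = f := funext fun p => (hsemi ..).symm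
  ext ⟨g, b⟩
  have hdf := mfderiv_mul_fst_snd_eq_zero_iff (hχ' g) (hfbar b)
  rw [hprod] at hdf
  refine hdf.trans ?_
  rw [smul_eq_zero, smul_eq_zero, or_iff_right (χ g).ne_zero,
    or_iff_left (mfderiv_character_ne_zero hχ' hnontriv g)]
  exact and_comm

/-- Let `G` be a (complex Lie / algebraic) group with a character `χ : G → ℂ*` nontrivial on the
connected component of the identity, `B` a smooth variety, and `f : G × B → ℂ` a semi-invariant:
`f (g, b) = χ g * f (1, b)`.  Setting `f̄ = f (1, ·)`, the critical locus `Z(df)` equals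
`pr_B⁻¹(Z(df̄) ∩ Z(f̄))`. -/
theorem critical_locus_of_semiinvariant
    {EG : Type*} [NormedAddCommGroup EG] [NormedSpace ℂ EG]
    {HG : Type*} [TopologicalSpace HG] (IG : ModelWithCorners ℂ EG HG)
    {EB : Type*} [NormedAddCommGroup EB] [NormedSpace ℂ EB]
    {HB : Type*} [TopologicalSpace HB] (IB : ModelWithCorners ℂ EB HB)
    {G : Type*} [TopologicalSpace G] [ChartedSpace HG G] [Group G] [IsTopologicalGroup G]
    [IsManifold IG (⊤ : ℕ∞) G] [LieGroup IG (⊤ : ℕ∞) G]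
    {B : Type*} [TopologicalSpace B] [ChartedSpace HB B] [IsManifold IB (⊤ : ℕ∞) B]
    (χ : G →* ℂˣ) (hχ : ContMDiff IG 𝓘(ℂ, ℂ) (⊤ : ℕ∞) fun g : G => (χ g : ℂ))
    (hnontriv : ∃ g ∈ connectedComponent (1 : G), χ g ≠ 1)
    (f : G × B → ℂ) (hf : ContMDiff (IG.prod IB) 𝓘(ℂ, ℂ) (⊤ : ℕ∞) f)
    (hsemi : ∀ (g : G) (b : B), f (g, b) = (χ g : ℂ) * f (1, b)) :
    {p : G × B | mfderiv (IG.prod IB) 𝓘(ℂ, ℂ) f p = 0}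
      = Prod.snd ⁻¹'
        {b : B | mfderiv IB 𝓘(ℂ, ℂ) (fun b : B => f (1, b)) b = 0 ∧ f (1, b) = 0} :=
  critical_locus_of_semiinvariant_general IG IB χ hχ hnontriv f hf hsemi
end
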